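/- Let X be a 2m-by-2m complex matrix with no eigenvalue on the closed negative real axis (-infinity, 0], and let R be the principal square root of X, i.e. R² = X and every eigenvalue of R has strictly positive real part. If X is self-dual (X^♯ = X), then R is self-dual: R^♯ = R. -/

import Mathlib

/-!
The map `X ↦ X^♯ = -Z Xᵀ Z` reverses products because `Z² = -1`, so `R^♯` is again a square root
of `X^♯ = X`; as `-Z Rᵀ Z = (Z Rᵀ)(-Z)`, it has the characteristic polynomial, hence the spectrum,
of `R`. Two square roots `S, R` of the same matrix satisfy the Sylvester equation
`S (S - R) = (S - R) (-R)`. When both spectra lie in the open right half-plane, `S` and `-R` have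
disjoint spectra, and then `p(S) (S - R) = (S - R) p(-R) = 0` for `p` the characteristic
polynomial of `-R`, with `p(S)` invertible by the spectral mapping theorem. Hence `S = R`.
-/

open Matrix

/-- The matrix `Z = [[0, I], [-I, 0]]` on `ℂ^(m ⊕ m)`. -/
noncomputable def Zmat (m : ℕ) : Matrix (Fin m ⊕ Fin m) (Fin m ⊕ Fin m) ℂ :=
  Matrix.fromBlocks 0 1 (-1) 0

/-- The dual `X^♯ = -Z Xᵀ Z` of a `2m × 2m` complex matrix. -/
noncomputable def dual {m : ℕ} (X : Matrix (Fin m ⊕ Fin m) (Fin m ⊕ Fin m) ℂ) :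
    Matrix (Fin m ⊕ Fin m) (Fin m ⊕ Fin m) ℂ :=
  -(Zmat m * Xᵀ * Zmat m)

open Polynomial

theorem SemiconjBy.aeval {R A : Type*} [CommSemiring R] [Semiring A] [Algebra R A]
    {y a b : A} (h : SemiconjBy y b a) (p : R[X]) :
    SemiconjBy y (aeval b p) (aeval a p) := by
  induction p using Polynomial.induction_on' with
  | add p q hp hq => simpa only [map_add] using hp.add_right hq
  | monomial k c =>
    simp only [aeval_monomial, ← Algebra.smul_def]
    exact (h.pow_right k).smul_right c

namespace Matrix

variable {n : Type*} [Fintype n] [DecidableEq n]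

theorem eq_zero_of_mul_eq_mul_of_disjoint_spectrum {K : Type*} [Field K] [IsAlgClosed K]
    {A B Y : Matrix n n K} (hAB : Disjoint (spectrum K A) (spectrum K B)) (h : A * Y = Y * B) :
    Y = 0 := by
  nontriviality Matrix n n K
  have hunit : IsUnit (aeval A B.charpoly) := by
    rw [← spectrum.zero_notMem_iff K, spectrum.map_polynomial_aeval_of_nonempty _ _
      (spectrum.nonempty_of_isAlgClosed_of_finiteDimensional K A)]
    rintro ⟨k, hkA, hk⟩
    exact hAB.ne_of_mem hkA (mem_spectrum_iff_isRoot_charpoly.2 hk) rfl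
  have hY : aeval A B.charpoly * Y = 0 := by
    rw [← (SemiconjBy.aeval h.symm B.charpoly).eq, aeval_self_charpoly, Matrix.mul_zero]
  exact hunit.mul_right_eq_zero.1 hY

theorem eq_of_mul_self_eq_of_spectrum_re_pos {R S : Matrix n n ℂ} (h : S * S = R * R)
    (hR : ∀ z ∈ spectrum ℂ R, 0 < z.re) (hS : ∀ z ∈ spectrum ℂ S, 0 < z.re) : S = R := by
  have hdisj : Disjoint (spectrum ℂ S) (spectrum ℂ (-R)) := by
    rw [← spectrum.neg_eq, Set.disjoint_left]
    intro z hzS hzR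
    have := hR (-z) (Set.mem_neg.1 hzR)
    linarith [hS z hzS, Complex.neg_re z]
  have hsylvester : S * (S - R) = (S - R) * -R := by
    rw [Matrix.mul_sub, h]
    noncomm_ring
  exact sub_eq_zero.1 (eq_zero_of_mul_eq_mul_of_disjoint_spectrum hdisj hsylvester)

end Matrix

section Dual

variable {m : ℕ}

theorem Zmat_mul_Zmat (m : ℕ) : Zmat m * Zmat m = -1 := by
  simp [Zmat, fromBlocks_multiply, ← fromBlocks_one, fromBlocks_neg]

theorem dual_mul (A B : Matrix (Fin m ⊕ Fin m) (Fin m ⊕ Fin m) ℂ) :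
    dual (A * B) = dual B * dual A := by
  calc dual (A * B) = -(Zmat m * Bᵀ * (-(Zmat m * Zmat m)) * Aᵀ * Zmat m) := by
        rw [dual, transpose_mul, Zmat_mul_Zmat, neg_neg, Matrix.mul_one, Matrix.mul_assoc _ Bᵀ]
    _ = dual B * dual A := by
        simp only [dual, Matrix.mul_neg, Matrix.neg_mul, neg_neg, Matrix.mul_assoc]

theorem charpoly_dual (A : Matrix (Fin m ⊕ Fin m) (Fin m ⊕ Fin m) ℂ) :
    (dual A).charpoly = A.charpoly := by
  calc (dual A).charpoly = (Zmat m * Aᵀ * -Zmat m).charpoly := by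
        rw [dual, Matrix.mul_neg]
    _ = (-(Zmat m * Zmat m) * Aᵀ).charpoly := by
        rw [charpoly_mul_comm, Matrix.neg_mul, Matrix.neg_mul, Matrix.mul_assoc]
    _ = A.charpoly := by
        rw [Zmat_mul_Zmat, neg_neg, Matrix.one_mul, charpoly_transpose]

theorem spectrum_dual (A : Matrix (Fin m ⊕ Fin m) (Fin m ⊕ Fin m) ℂ) :
    spectrum ℂ (dual A) = spectrum ℂ A := by
  ext z
  rw [mem_spectrum_iff_isRoot_charpoly, mem_spectrum_iff_isRoot_charpoly, charpoly_dual]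

end Dual

theorem principal_sqrt_of_selfDual_is_selfDual_general
    (m : ℕ) (X R : Matrix (Fin m ⊕ Fin m) (Fin m ⊕ Fin m) ℂ)
    (hsq : R * R = X)
    (hre : ∀ z ∈ spectrum ℂ R, 0 < z.re)
    (hdual : dual X = X) :
    dual R = R := by
  refine eq_of_mul_self_eq_of_spectrum_re_pos ?_ hre (by rwa [spectrum_dual])
  rw [← dual_mul, hsq, hdual]

/-- If `X` is self-dual with no eigenvalue on `(-∞, 0]`, and `R` is its
principal square root, then `R` is self-dual. -/
theorem principal_sqrt_of_selfDual_is_selfDual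
    (m : ℕ) (X R : Matrix (Fin m ⊕ Fin m) (Fin m ⊕ Fin m) ℂ)
    (hspec : ∀ z ∈ spectrum ℂ X, ¬ (z.im = 0 ∧ z.re ≤ 0))
    (hsq : R * R = X)
    (hre : ∀ z ∈ spectrum ℂ R, 0 < z.re)
    (hdual : dual X = X) :
    dual R = R :=
  principal_sqrt_of_selfDual_is_selfDual_general m X R hsq hre hdual
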